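/- Fix m ∈ {0,1,…,q−2}, let j ≥ 0 and 0 ≤ k ≤ m + j(q−1). Then: (1) σ_{k, m+j(q−1)}(Y) = 0 if k is not congruent to m modulo (q−1); and (2) for each 0 ≤ i ≤ j there exists a polynomial τ^{(m)}_{i,j}(X) ∈ L[X] such that σ_{m+i(q−1), m+j(q−1)}(Y) = Y^m · τ^{(m)}_{i,j}(Y^{q−1}). -/

import Mathlib

open Polynomial PowerSeries Finset

/-- The Lubin–Tate logarithm `log_LT(Z) = Σ_{k≥0} π^{-k} Z^{q^k}` (for `q ≥ 2` the inner sum has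
at most one nonzero term, since `q^k = n` forces `k ≤ n`). -/
noncomputable def logLT {L : Type*} [Field L] (q : ℕ) (π : L) : PowerSeries L :=
  PowerSeries.mk fun n => ∑ k ∈ Finset.range (n + 1), if n = q ^ k then (π ^ k)⁻¹ else 0

/-- The polynomial `P_n(Y) = Σ_{k=0}^n d_n^{(k)} Y^k / k!`, where `d_n^{(k)}` is the coefficient
of `Z^n` in `log_LT(Z)^k`; equivalently `exp(Y·log_LT(Z)) = Σ_{n≥0} P_n(Y) Z^n`. -/
noncomputable def LTpoly {L : Type*} [Field L] (q : ℕ) (π : L) (n : ℕ) : Polynomial L :=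
  ∑ k ∈ Finset.range (n + 1),
    Polynomial.C (PowerSeries.coeff n (logLT q π ^ k) / (k.factorial : L)) * Polynomial.X ^ k

/-!
Since `q ≡ 1 [MOD q - 1]`, the series `log_LT` only involves monomials `Z^n` with `n ≡ 1`, so
`P_n` only involves monomials `Y^e` with `e ≡ n`, and it has degree exactly `n` with leading
coefficient `1/n!`.  Comparing the coefficients of `s^k Y^e` in
`P_N(Y s) = Σ_i σ_{i,N}(Y) P_i(s)` gives a triangular system in the `σ_{i,N}`; downward induction
on `k` shows that every monomial `Y^e` of `σ_{k,N}` has `e ≡ N`, and that `σ_{k,N} = 0` unless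
`k ≡ N`.  For `N = m + j(q-1)` with `m < q - 1`, a polynomial whose exponents are all `≡ m` is
`Y^m` times a polynomial in `Y^(q-1)`.
-/

namespace PowerSeries

variable {R : Type*} [CommSemiring R]

theorem coeff_pow_self_of_constantCoeff_eq_zero {f : R⟦X⟧} (hf : constantCoeff f = 0) (n : ℕ) :
    coeff n (f ^ n) = coeff 1 f ^ n := by
  obtain ⟨g, rfl⟩ := X_dvd_iff.2 hf
  rw [mul_pow, coeff_X_pow_mul', if_pos le_rfl, Nat.sub_self, coeff_zero_eq_constantCoeff_apply,
    map_pow, coeff_succ_X_mul, coeff_zero_eq_constantCoeff_apply]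

theorem modEq_of_coeff_pow_ne_zero {f : R⟦X⟧} {d : ℕ}
    (hf : ∀ n, coeff n f ≠ 0 → n ≡ 1 [MOD d]) {n k : ℕ} (h : coeff n (f ^ k) ≠ 0) :
    n ≡ k [MOD d] := by
  induction k generalizing n with
  | zero =>
    obtain rfl : n = 0 := by
      by_contra hn
      simp [coeff_one, hn] at h
    rfl
  | succ k ih =>
    rw [pow_succ, coeff_mul] at h
    obtain ⟨⟨a, b⟩, hab, hne⟩ := exists_ne_zero_of_sum_ne_zero h
    rw [← mem_antidiagonal.1 hab]
    exact (ih (left_ne_zero_of_mul hne)).add (hf b (right_ne_zero_of_mul hne))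

end PowerSeries

namespace Polynomial

variable {R : Type*} [CommSemiring R]

theorem coeff_aeval_C_X_mul_X (f : R[X]) (n : ℕ) :
    (aeval (C X * X : R[X][X]) f).coeff n = C (f.coeff n) * X ^ n := by
  have : aeval (C X * X : R[X][X]) f = (f.map C).comp (C X * X) := by
    rw [aeval_def, comp, eval₂_map]; rfl
  rw [this, comp_C_mul_X_coeff, coeff_map, mul_comm]

theorem expand_contract_of_coeff_eq_zero {d : ℕ} (hd : d ≠ 0) {f : R[X]}
    (hf : ∀ n, ¬ d ∣ n → f.coeff n = 0) : expand R d (contract d f) = f := by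
  ext n
  rw [coeff_expand (Nat.pos_of_ne_zero hd), coeff_contract hd]
  split_ifs with h
  · rw [Nat.div_mul_cancel h]
  · exact (hf n h).symm

theorem exists_eq_X_pow_mul_comp_X_pow {m d : ℕ} (hm : m < d) {f : R[X]}
    (hf : ∀ e, f.coeff e ≠ 0 → e ≡ m [MOD d]) : ∃ τ : R[X], f = X ^ m * τ.comp (X ^ d) := by
  obtain ⟨g, rfl⟩ : X ^ m ∣ f := X_pow_dvd_iff.2 fun e he => by
    by_contra h
    exact he.ne ((hf e h).eq_of_lt_of_lt (he.trans hm) hm)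
  have hg : ∀ e, ¬ d ∣ e → g.coeff e = 0 := fun e he => by
    by_contra h
    rw [← coeff_X_pow_mul] at h
    refine he (Nat.modEq_zero_iff_dvd.1 (Nat.ModEq.add_right_cancel' m ?_))
    rw [zero_add]
    exact hf _ h
  refine ⟨contract d g, ?_⟩
  rw [← expand_eq_comp_X_pow, expand_contract_of_coeff_eq_zero (by omega) hg]

theorem modEq_of_coeff_ne_zero_of_aeval_eq_sum [NoZeroDivisors R] {P : ℕ → R[X]}
    {σ : ℕ → ℕ → R[X]} {d N : ℕ}
    (hdeg : ∀ n e, n < e → (P n).coeff e = 0) (hlead : ∀ n, (P n).coeff n ≠ 0)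
    (hgrad : ∀ n e, (P n).coeff e ≠ 0 → e ≡ n [MOD d])
    (hσ : aeval (C X * X : R[X][X]) (P N) = ∑ i ∈ range (N + 1), C (σ i N) * (P i).map C)
    {k e : ℕ} (hk : k ≤ N) (he : (σ k N).coeff e ≠ 0) :
    e ≡ N [MOD d] ∧ k ≡ N [MOD d] := by
  have hcoeff : ∀ k e, (P N).coeff k * (X ^ k : R[X]).coeff e =
      ∑ i ∈ range (N + 1), (σ i N).coeff e * (P i).coeff k := fun k e => by
    simpa only [coeff_aeval_C_X_mul_X, finsetSum_coeff, coeff_C_mul, coeff_map, coeff_mul_C]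
      using congrArg (fun f : R[X][X] => (f.coeff k).coeff e) hσ
  suffices ∀ k, k ≤ N → ∀ e, (σ k N).coeff e ≠ 0 → e ≡ N [MOD d] ∧ k ≡ N [MOD d] from
    this k hk e he
  refine Nat.strong_decreasing_induction ⟨N, fun k hNk hk => absurd hk (by omega)⟩ ?_
  intro k ih hk e he
  by_contra hgoal
  have hdiag : (P N).coeff k * (X ^ k : R[X]).coeff e = 0 := by
    rw [coeff_X_pow]
    split_ifs with hek
    · rw [mul_one]
      by_contra h
      exact hgoal ⟨hek ▸ hgrad N k h, hgrad N k h⟩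
    · rw [mul_zero]
  have hoff : ∀ i ∈ range (N + 1), i ≠ k → (σ i N).coeff e * (P i).coeff k = 0 := by
    intro i hi hik
    by_contra h
    obtain ⟨hσi, hPi⟩ := mul_ne_zero_iff.1 h
    have hki : k < i := lt_of_le_of_ne (not_lt.1 fun hik' => hPi (hdeg i k hik')) hik.symm
    obtain ⟨heN, hiN⟩ := ih i hki (Nat.lt_succ_iff.1 (mem_range.1 hi)) e hσi
    exact hgoal ⟨heN, (hgrad i k hPi).trans hiN⟩
  have := hcoeff k e
  rw [hdiag, sum_eq_single_of_mem k (mem_range.2 (by omega)) hoff] at this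
  exact mul_ne_zero he (hlead k) this.symm

end Polynomial

section LubinTate

variable {L : Type*} [Field L] (q : ℕ) (π : L)

theorem constantCoeff_logLT : constantCoeff (logLT q π) = 0 := by
  rw [← coeff_zero_eq_constantCoeff_apply, logLT, coeff_mk, sum_range_one, pow_zero,
    if_neg zero_ne_one]

theorem coeff_one_logLT (hq : 2 ≤ q) : coeff 1 (logLT q π) = 1 := by
  rw [logLT, coeff_mk, sum_range_succ, sum_range_one, if_pos (pow_zero q).symm,
    if_neg (by rw [pow_one]; omega), pow_zero, inv_one, add_zero]

theorem modEq_one_of_coeff_logLT_ne_zero (hq : 1 ≤ q) {n : ℕ} (h : coeff n (logLT q π) ≠ 0) :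
    n ≡ 1 [MOD q - 1] := by
  rw [logLT, coeff_mk] at h
  obtain ⟨k, -, hk⟩ := exists_ne_zero_of_sum_ne_zero h
  obtain rfl : n = q ^ k := by
    by_contra hn
    exact hk (if_neg hn)
  simpa only [one_pow] using ((Nat.modEq_iff_dvd' hq).2 dvd_rfl).symm.pow k

theorem coeff_LTpoly (n e : ℕ) : (LTpoly q π n).coeff e =
    if e ≤ n then coeff n (logLT q π ^ e) / (e.factorial : L) else 0 := by
  simp only [LTpoly, finsetSum_coeff, Polynomial.coeff_C_mul, Polynomial.coeff_X_pow, mul_ite,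
    mul_one, mul_zero, sum_ite_eq, mem_range, Nat.lt_succ_iff]

theorem LTpoly_zero : LTpoly q π 0 = 1 := by
  simp [LTpoly]

theorem coeff_LTpoly_of_lt {n e : ℕ} (h : n < e) : (LTpoly q π n).coeff e = 0 := by
  rw [coeff_LTpoly, if_neg (by omega)]

theorem coeff_LTpoly_self_ne_zero [CharZero L] (hq : 2 ≤ q) (n : ℕ) :
    (LTpoly q π n).coeff n ≠ 0 := by
  rw [coeff_LTpoly, if_pos le_rfl,
    coeff_pow_self_of_constantCoeff_eq_zero (constantCoeff_logLT q π), coeff_one_logLT q π hq,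
    one_pow, one_div]
  exact inv_ne_zero (Nat.cast_ne_zero.2 n.factorial_ne_zero)

theorem modEq_of_coeff_LTpoly_ne_zero (hq : 1 ≤ q) {n e : ℕ} (h : (LTpoly q π n).coeff e ≠ 0) :
    e ≡ n [MOD q - 1] := by
  rw [coeff_LTpoly] at h
  split_ifs at h
  · exact (modEq_of_coeff_pow_ne_zero (fun _ => modEq_one_of_coeff_logLT_ne_zero q π hq)
      (div_ne_zero_iff.1 h).1).symm
  · exact absurd rfl h

end LubinTate

theorem stmt8_general (p : ℕ) [Fact p.Prime] (L : Type*) [Field L]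
    [Algebra ℚ_[p] L]
    (π : L)
    (q : ℕ)
    (σ : ℕ → ℕ → Polynomial L)
    (hσ : ∀ j : ℕ,
      Polynomial.aeval (Polynomial.C Polynomial.X * Polynomial.X :
          Polynomial (Polynomial L)) (LTpoly q π j) =
        ∑ i ∈ Finset.range (j + 1),
          Polynomial.C (σ i j) * (LTpoly q π i).map Polynomial.C)
    (m : ℕ) (hm : m ≤ q - 2) (j : ℕ) :
    (∀ k : ℕ, k ≤ m + j * (q - 1) → ¬ k ≡ m [MOD q - 1] →
        σ k (m + j * (q - 1)) = 0) ∧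
      ∀ i : ℕ, i ≤ j → ∃ τ : Polynomial L,
        σ (m + i * (q - 1)) (m + j * (q - 1)) =
          Polynomial.X ^ m * τ.comp (Polynomial.X ^ (q - 1)) := by
  have : CharZero L := charZero_of_injective_algebraMap (algebraMap ℚ_[p] L).injective
  rcases lt_or_ge q 2 with hq | hq
  · obtain ⟨rfl, hd⟩ : m = 0 ∧ q - 1 = 0 := by omega
    simp only [hd, mul_zero, add_zero, pow_zero, one_mul]
    refine ⟨fun k hk hk0 => absurd (Nat.le_zero.1 hk ▸ rfl) hk0, fun _ _ => ⟨1, ?_⟩⟩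
    simpa [LTpoly_zero, map_eq_one_iff _ Polynomial.C_injective] using (hσ 0).symm
  · have hNm : m + j * (q - 1) ≡ m [MOD q - 1] := Nat.add_mul_mod_self_right m j (q - 1)
    have hsupp {k e : ℕ} (hk : k ≤ m + j * (q - 1)) (he : (σ k (m + j * (q - 1))).coeff e ≠ 0) :
        e ≡ m [MOD q - 1] ∧ k ≡ m [MOD q - 1] :=
      (modEq_of_coeff_ne_zero_of_aeval_eq_sum (fun _ _ => coeff_LTpoly_of_lt q π)
        (coeff_LTpoly_self_ne_zero q π hq) (fun _ _ => modEq_of_coeff_LTpoly_ne_zero q π (by omega))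
        (hσ _) hk he).imp (·.trans hNm) (·.trans hNm)
    refine ⟨fun k hk hkm => ?_, fun i hi => exists_eq_X_pow_mul_comp_X_pow (by omega) ?_⟩
    · ext e
      by_contra he
      exact hkm (hsupp hk he).2
    · exact fun e he => (hsupp (by gcongr) he).1

/-- Fix `m ∈ {0,…,q−2}`, `j ≥ 0` and `0 ≤ k ≤ m + j(q−1)`.  Let `σ i j` be the (unique)
coefficient polynomials with `P_j(Y·s) = Σ_{i≤j} σ_{i,j}(Y) P_i(s)` in `L[Y][s]`.  Then:
(1) `σ_{k, m+j(q−1)}(Y) = 0` if `k` is not congruent to `m` modulo `q−1`; and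
(2) for each `0 ≤ i ≤ j` there exists `τ^{(m)}_{i,j}(X) ∈ L[X]` with
`σ_{m+i(q−1), m+j(q−1)}(Y) = Y^m · τ^{(m)}_{i,j}(Y^{q−1})`. -/
theorem stmt8 (p : ℕ) [Fact p.Prime] (L : Type*) [Field L]
    [Algebra ℚ_[p] L] [FiniteDimensional ℚ_[p] L]
    [Algebra ℤ_[p] L] [IsScalarTower ℤ_[p] ℚ_[p] L]
    (π : L) (hπmem : π ∈ integralClosure ℤ_[p] L)
    (hirr : Irreducible (⟨π, hπmem⟩ : integralClosure ℤ_[p] L))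
    (q : ℕ) (hq : Nat.card ((integralClosure ℤ_[p] L) ⧸
      Ideal.span {(⟨π, hπmem⟩ : integralClosure ℤ_[p] L)}) = q)
    (σ : ℕ → ℕ → Polynomial L)
    (hσ : ∀ j : ℕ,
      Polynomial.aeval (Polynomial.C Polynomial.X * Polynomial.X :
          Polynomial (Polynomial L)) (LTpoly q π j) =
        ∑ i ∈ Finset.range (j + 1),
          Polynomial.C (σ i j) * (LTpoly q π i).map Polynomial.C)
    (m : ℕ) (hm : m ≤ q - 2) (j : ℕ) :
    (∀ k : ℕ, k ≤ m + j * (q - 1) → ¬ k ≡ m [MOD q - 1] →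
        σ k (m + j * (q - 1)) = 0) ∧
      ∀ i : ℕ, i ≤ j → ∃ τ : Polynomial L,
        σ (m + i * (q - 1)) (m + j * (q - 1)) =
          Polynomial.X ^ m * τ.comp (Polynomial.X ^ (q - 1)) :=
  stmt8_general p L π q σ hσ m hm j
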